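/- Let X be a Banach space and S, T : X → X bounded operators such that: ℓ_1 does not embed into X; every weakly null sequence in X either is norm null, or admits a c_0 spreading model, or admits an ℓ_1 spreading model; S maps every sequence generating a c_0 spreading model to a norm-null sequence; and S maps every sequence generating an ℓ_1 spreading model to a sequence not admitting an ℓ_1 spreading model (so, after passing to a subsequence, either norm null or generating a c_0 spreading model); and T satisfies the same two properties. Then the composition TS maps every weakly null sequence to a norm-null sequence, and hence TS is a compact operator. -/

import Mathlib

open Filter Topology

variable {X : Type*} [NormedAddCommGroup X] [NormedSpace ℝ X]

/-- A sequence is norm null if `‖x_k‖ → 0`. -/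
def NormNull (x : ℕ → X) : Prop :=
  Tendsto (fun k => ‖x k‖) atTop (nhds 0)

/-- A sequence is weakly null if `f (x_k) → 0` for every bounded functional. -/
def WeaklyNull (x : ℕ → X) : Prop :=
  ∀ f : X →L[ℝ] ℝ, Tendsto (fun k => f (x k)) atTop (nhds 0)

/-- `(x_k)` generates a `c₀` spreading model. -/
def GeneratesC0SM (x : ℕ → X) : Prop :=
  ∃ C : ℝ, 1 ≤ C ∧ ∀ (n : ℕ) (k : ℕ → ℕ), StrictMono k → n ≤ k 0 →
    ∀ a : ℕ → ℝ,
      ‖∑ i ∈ Finset.range n, a i • x (k i)‖ ≤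
          C * (⨆ i ∈ Finset.range n, |a i|) ∧
      (⨆ i ∈ Finset.range n, |a i|) ≤
          C * ‖∑ i ∈ Finset.range n, a i • x (k i)‖

/-- `(x_k)` generates an `ℓ₁` spreading model. -/
def GeneratesL1SM (x : ℕ → X) : Prop :=
  ∃ C : ℝ, 1 ≤ C ∧ ∀ (n : ℕ) (k : ℕ → ℕ), StrictMono k → n ≤ k 0 →
    ∀ a : ℕ → ℝ,
      ‖∑ i ∈ Finset.range n, a i • x (k i)‖ ≤
          C * ∑ i ∈ Finset.range n, |a i| ∧
      C⁻¹ * ∑ i ∈ Finset.range n, |a i| ≤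
          ‖∑ i ∈ Finset.range n, a i • x (k i)‖

/-- `(x_k)` admits a `c₀` spreading model. -/
def AdmitsC0SM (x : ℕ → X) : Prop :=
  ∃ φ : ℕ → ℕ, StrictMono φ ∧ GeneratesC0SM (fun k => x (φ k))

/-- `(x_k)` admits an `ℓ₁` spreading model. -/
def AdmitsL1SM (x : ℕ → X) : Prop :=
  ∃ φ : ℕ → ℕ, StrictMono φ ∧ GeneratesL1SM (fun k => x (φ k))

/-- `ℓ₁` embeds into `X` if there is an into-isomorphism from `ℓ₁`. -/
def L1Embeds (X : Type*) [NormedAddCommGroup X] [NormedSpace ℝ X] : Prop :=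
  ∃ (f : lp (fun _ : ℕ => ℝ) 1 →L[ℝ] X) (c : ℝ), 0 < c ∧
    ∀ v, c * ‖v‖ ≤ ‖f v‖

/-!
A weakly null sequence `x` has a subsequence along which `T S x` is norm null: apply the
trichotomy to `x`; a `c₀` spreading model is killed by `S`, and an `ℓ₁` spreading model is sent
by `S` to a weakly null sequence without `ℓ₁` spreading models, to which the trichotomy applies
again and `T` kills what is left. Every subsequence of `x` is weakly null, so `T S x` is norm null.

Compactness then comes from Rosenthal's `ℓ₁` theorem: a bounded sequence has a weakly Cauchy
subsequence, its differences are weakly null, so `T S` maps it to a norm Cauchy sequence.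
Rosenthal's theorem is proved directly. If no subsequence of `v` is weakly Cauchy, a diagonal
argument over rational pairs `r < s` yields a subsequence along every further subsequence of which
some functional of norm `≤ 1` oscillates across `(r, s)`. A fusion argument then extracts indices
on which the sets `{f | f (v n) < r}` and `{f | s < f (v n)}` are Boolean independent, and on
such indices `‖∑ aᵢ vᵢ‖ ≥ (s - r) / 2 · ∑ |aᵢ|`.
-/

open Set Function

section BooleanIndependence

variable {K : Type*} (A B : ℕ → Set K)

def Oscillates (M : Set ℕ) (f : K) : Prop :=
  {n ∈ M | f ∈ A n}.Infinite ∧ {n ∈ M | f ∈ B n}.Infinite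

def cylinder (k : ℕ) (t : ℕ → ℕ) (ε : ℕ → Bool) : Set K :=
  {f | ∀ i < k, f ∈ cond (ε i) (A (t i)) (B (t i))}

def HereditarilyOscillates (D : Set K) (M : Set ℕ) : Prop :=
  ∀ M' ⊆ M, M'.Infinite → ∃ f ∈ D, Oscillates A B M' f

variable {A B}

theorem Oscillates.of_diff_finite {M N : Set ℕ} {f : K} (h : Oscillates A B N f)
    (hNM : (N \ M).Finite) : Oscillates A B M f := by
  have key : ∀ C : ℕ → Set K, {n ∈ N | f ∈ C n}.Infinite → {n ∈ M | f ∈ C n}.Infinite :=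
    fun C hC => (hC.sdiff hNM).mono <| by
      rintro n ⟨⟨hnN, hn⟩, hnM⟩
      exact ⟨by_contra fun h' => hnM ⟨hnN, h'⟩, hn⟩
  exact ⟨key A h.1, key B h.2⟩

theorem Oscillates.mono {M N : Set ℕ} {f : K} (h : Oscillates A B N f) (hNM : N ⊆ M) :
    Oscillates A B M f :=
  h.of_diff_finite (by rw [sdiff_eq_empty.2 hNM]; exact finite_empty)

theorem cylinder_congr {k : ℕ} {t t' : ℕ → ℕ} (h : ∀ i < k, t i = t' i) (ε : ℕ → Bool) :
    cylinder A B k t ε = cylinder A B k t' ε := by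
  ext f
  exact forall₂_congr fun i hi => by rw [h i hi]

theorem exists_strictMono_fusion {Q : ℕ → ℕ → Set ℕ → Prop}
    (hQ : ∀ j n M M', M' ⊆ M → Q j n M → Q j n M')
    (hstep : ∀ j n M, M.Infinite → ∃ M' ⊆ M, M'.Infinite ∧ Q j n M')
    {M₀ : Set ℕ} (hM₀ : M₀.Infinite) :
    ∃ n : ℕ → ℕ, StrictMono n ∧ (∀ j, n j ∈ M₀) ∧ ∀ j, Q j (n j) (n '' Ioi j) := by
  choose next hnext_sub hnext_inf hnext_Q using hstep
  let stage : ℕ → {M : Set ℕ // M.Infinite} := fun j =>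
    Nat.rec ⟨M₀, hM₀⟩ (fun j M =>
      ⟨next j (sInf M.1) M.1 M.2 \ Iic (sInf M.1), (hnext_inf j _ M.1 M.2).sdiff (finite_Iic _)⟩) j
  set n : ℕ → ℕ := fun j => sInf (stage j).1
  have hn_mem : ∀ j, n j ∈ (stage j).1 := fun j => Nat.sInf_mem (stage j).2.nonempty
  have hstage_succ : ∀ j, (stage (j + 1)).1 = next j (n j) (stage j).1 (stage j).2 \ Iic (n j) :=
    fun _ => rfl
  have hanti : Antitone fun j => (stage j).1 := antitone_nat_of_succ_le fun j =>
    (hstage_succ j).trans_subset (sdiff_subset.trans (hnext_sub ..))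
  have hn_mono : StrictMono n := strictMono_nat_of_lt_succ fun j => by
    have := hn_mem (j + 1)
    rw [hstage_succ] at this
    exact not_le.1 this.2
  refine ⟨n, hn_mono, fun j => hanti (Nat.zero_le j) (hn_mem j), fun j => ?_⟩
  refine hQ _ _ _ _ ?_ (hnext_Q j (n j) (stage j).1 (stage j).2)
  rintro _ ⟨i, hi, rfl⟩
  have : n i ∈ (stage (j + 1)).1 := hanti (Nat.succ_le_of_lt hi) (hn_mem i)
  rw [hstage_succ] at this
  exact this.1

theorem exists_forall_of_exists_update {α : Type*} {Q : ℕ → (ℕ → α) → Prop}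
    (hQ : ∀ k t t', (∀ i < k, t i = t' i) → Q k t → Q k t') {t₀ : ℕ → α} (h₀ : Q 0 t₀)
    (hstep : ∀ k t, Q k t → ∃ a, Q (k + 1) (update t k a)) : ∃ t, ∀ k, Q k t := by
  choose a ha using hstep
  let T : (k : ℕ) → {t // Q k t} := fun k =>
    Nat.rec ⟨t₀, h₀⟩ (fun k t => ⟨update t.1 k (a k t.1 t.2), ha k t.1 t.2⟩) k
  have hT : ∀ i k, i < k → (T k).1 i = (T (i + 1)).1 i := by
    intro i k hik
    induction k, hik using Nat.le_induction with
    | base => rfl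
    | succ k hk ih => exact (update_of_ne (by omega) _ _).trans ih
  exact ⟨fun i => (T (i + 1)).1 i, fun k => hQ k _ _ (fun i hi => hT i k hi) (T k).2⟩

theorem exists_update_hereditarilyOscillates {k : ℕ} {t : ℕ → ℕ} {M : Set ℕ} (hM : M.Infinite)
    (h : ∀ ε, HereditarilyOscillates A B (cylinder A B k t ε) M) :
    ∃ v, ∃ M' : Set ℕ, M'.Infinite ∧
      ∀ ε, HereditarilyOscillates A B (cylinder A B (k + 1) (update t k v) ε) M' := by
  -- Otherwise fusion yields indices `n j`, each killing some pattern `ε j` on the later indices.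
  -- Infinitely many `n j` share the first `k + 1` signs of their pattern, and a functional
  -- oscillating on those `n j` lies in one of the killed cylinders while oscillating on its tail.
  by_contra! hdead
  obtain ⟨n, hn_mono, hnM, hkill⟩ := exists_strictMono_fusion
    (Q := fun _ v M' => ∃ ε, ∀ f ∈ cylinder A B (k + 1) (update t k v) ε, ¬ Oscillates A B M' f)
    (fun _ _ _ _ hsub ⟨ε, hε⟩ => ⟨ε, fun f hf hosc => hε f hf (hosc.mono hsub)⟩)
    (fun _ v M' hM' => by
      obtain ⟨ε, hε⟩ := hdead v M' hM'
      simp only [HereditarilyOscillates, not_forall, not_exists, not_and] at hε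
      obtain ⟨M'', hsub, hinf, hno⟩ := hε
      exact ⟨M'', hsub, hinf, ε, hno⟩) hM
  choose ε hε using hkill
  obtain ⟨y, hy⟩ := Finite.exists_infinite_fiber fun j (i : Fin (k + 1)) => ε j i
  set J := (fun j (i : Fin (k + 1)) => ε j i) ⁻¹' {y}
  have hJ : J.Infinite := infinite_coe_iff.1 hy
  obtain ⟨j₀, hj₀⟩ := hJ.nonempty
  obtain ⟨f, hf, hosc⟩ := h (ε j₀) (n '' J) (image_subset_iff.2 fun j _ => hnM j)
    (hJ.image hn_mono.injective.injOn)
  obtain ⟨j, hjJ, hj⟩ : ∃ j ∈ J, f ∈ cond (ε j₀ k) (A (n j)) (B (n j)) := by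
    cases ε j₀ k
    · obtain ⟨_, ⟨j, hjJ, rfl⟩, hfB⟩ := hosc.2.nonempty
      exact ⟨j, hjJ, hfB⟩
    · obtain ⟨_, ⟨j, hjJ, rfl⟩, hfA⟩ := hosc.1.nonempty
      exact ⟨j, hjJ, hfA⟩
  have hεj : ∀ i ≤ k, ε j i = ε j₀ i := fun i hi =>
    congrFun ((hjJ : _ = y).trans (hj₀ : _ = y).symm) ⟨i, Nat.lt_succ_of_le hi⟩
  refine hε j f (fun i hi => ?_) (hosc.of_diff_finite ?_)
  · rcases (Nat.lt_succ_iff.1 hi).lt_or_eq with hik | rfl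
    · rw [update_of_ne hik.ne, hεj i hik.le]
      exact hf i hik
    · rw [update_self, hεj i le_rfl]
      exact hj
  · refine ((finite_Iic j).image n).subset ?_
    rintro _ ⟨⟨i, -, rfl⟩, hi⟩
    exact ⟨i, mem_Iic.2 (not_lt.1 fun h => hi ⟨i, h, rfl⟩), rfl⟩

theorem exists_cylinder_nonempty_of_hereditarilyOscillates {M₀ : Set ℕ} (hM₀ : M₀.Infinite)
    (h : HereditarilyOscillates A B univ M₀) :
    ∃ t : ℕ → ℕ, ∀ k ε, (cylinder A B k t ε).Nonempty := by
  obtain ⟨t, ht⟩ := exists_forall_of_exists_update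
    (Q := fun k t => ∃ M : Set ℕ, M.Infinite ∧
      ∀ ε, HereditarilyOscillates A B (cylinder A B k t ε) M)
    (fun k t t' htt' ⟨M, hM, hosc⟩ => ⟨M, hM, fun ε => cylinder_congr htt' ε ▸ hosc ε⟩)
    (t₀ := id) ⟨M₀, hM₀, fun ε => by simpa [cylinder] using h⟩
    (fun k t ⟨M, hM, hosc⟩ => exists_update_hereditarilyOscillates hM hosc)
  refine ⟨t, fun k ε => ?_⟩
  obtain ⟨M, hM, hosc⟩ := ht k
  obtain ⟨f, hf, -⟩ := hosc ε M subset_rfl hM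
  exact ⟨f, hf⟩

end BooleanIndependence

section Rosenthal

open Metric

def WeaklyCauchy (x : ℕ → X) : Prop :=
  ∀ f : X →L[ℝ] ℝ, ∃ L, Tendsto (fun k => f (x k)) atTop (𝓝 L)

def dualBallLT (v : ℕ → X) (r : ℝ) (n : ℕ) : Set (closedBall (0 : X →L[ℝ] ℝ) 1) :=
  {f | (f : X →L[ℝ] ℝ) (v n) < r}

def dualBallGT (v : ℕ → X) (s : ℝ) (n : ℕ) : Set (closedBall (0 : X →L[ℝ] ℝ) 1) :=
  {f | s < (f : X →L[ℝ] ℝ) (v n)}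

theorem exists_rat_frequently_lt_frequently_gt_of_not_tendsto {u : ℕ → ℝ} {C : ℝ}
    (hu : ∀ n, |u n| ≤ C) (hconv : ¬ ∃ L, Tendsto u atTop (𝓝 L)) :
    ∃ q₁ q₂ : ℚ, q₁ < q₂ ∧ (∃ᶠ n in atTop, u n < q₁) ∧ ∃ᶠ n in atTop, (q₂ : ℝ) < u n := by
  have hle : IsBoundedUnder (· ≤ ·) atTop u := isBoundedUnder_of ⟨C, fun n => (abs_le.1 (hu n)).2⟩
  have hge : IsBoundedUnder (· ≥ ·) atTop u := isBoundedUnder_of ⟨-C, fun n => (abs_le.1 (hu n)).1⟩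
  have hlt : liminf u atTop < limsup u atTop := (liminf_le_limsup hle hge).lt_of_ne fun h =>
    hconv ⟨_, tendsto_of_liminf_eq_limsup h rfl hle hge⟩
  obtain ⟨q₁, h₁, h₁₂⟩ := exists_rat_btwn hlt
  obtain ⟨q₂, hq, h₂⟩ := exists_rat_btwn h₁₂
  exact ⟨q₁, q₂, by exact_mod_cast hq, frequently_lt_of_liminf_lt hle.isCoboundedUnder_ge h₁,
    frequently_lt_of_lt_limsup hge.isCoboundedUnder_le h₂⟩

theorem StrictMono.infinite_sep_image_Ioi {n : ℕ → ℕ} (hn : StrictMono n) {P : ℕ → Prop}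
    (h : ∃ᶠ i in atTop, P (n i)) (j : ℕ) : {m ∈ n '' Ioi j | P m}.Infinite := by
  refine (((Nat.frequently_atTop_iff_infinite.1 h).sdiff (finite_Iic j)).image
    hn.injective.injOn).mono ?_
  rintro _ ⟨i, ⟨hi, hij⟩, rfl⟩
  exact ⟨⟨i, mem_Ioi.2 (not_le.1 hij), rfl⟩, hi⟩

theorem exists_dualBall_not_tendsto {x : ℕ → X} (hx : ¬ WeaklyCauchy x) :
    ∃ g : closedBall (0 : X →L[ℝ] ℝ) 1,
      ¬ ∃ L, Tendsto (fun k => (g : X →L[ℝ] ℝ) (x k)) atTop (𝓝 L) := by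
  obtain ⟨f, hf⟩ : ∃ f : X →L[ℝ] ℝ, ¬ ∃ L, Tendsto (fun k => f (x k)) atTop (𝓝 L) := by
    simpa [WeaklyCauchy] using hx
  have hc : 0 < ‖f‖ + 1 := by positivity
  have hball : (‖f‖ + 1)⁻¹ • f ∈ closedBall (0 : X →L[ℝ] ℝ) 1 := by
    rw [mem_closedBall_zero_iff, norm_smul, norm_inv, Real.norm_of_nonneg hc.le,
      inv_mul_le_one₀ hc]
    linarith
  refine ⟨⟨_, hball⟩, fun ⟨L, hL⟩ => hf ⟨(‖f‖ + 1) * L, ?_⟩⟩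
  simpa [hc.ne'] using hL.const_mul (‖f‖ + 1)

theorem exists_hereditarilyOscillates_of_not_weaklyCauchy {v : ℕ → X} {C : ℝ}
    (hv : ∀ k, ‖v k‖ ≤ C) (hnwc : ∀ φ : ℕ → ℕ, StrictMono φ → ¬ WeaklyCauchy fun i => v (φ i)) :
    ∃ r s : ℝ, r < s ∧ ∃ M₀ : Set ℕ, M₀.Infinite ∧
      HereditarilyOscillates (dualBallLT v r) (dualBallGT v s) univ M₀ := by
  -- Diagonalising over all rational pairs gives a subsequence along which no functional of the
  -- dual ball oscillates across a rational pair, so every such functional converges along it.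
  by_contra! hno
  obtain ⟨e, he⟩ : ∃ e : ℕ → ℚ × ℚ, Surjective e := exists_surjective_nat _
  obtain ⟨n, hn, -, hQ⟩ := exists_strictMono_fusion
    (Q := fun j _ M => ((e j).1 : ℝ) < (e j).2 →
      ∀ f, ¬ Oscillates (dualBallLT v (e j).1) (dualBallGT v (e j).2) M f)
    (fun _ _ _ _ hsub hQ hlt f hosc => hQ hlt f (hosc.mono hsub))
    (fun j _ M hM => by
      by_cases hlt : ((e j).1 : ℝ) < (e j).2
      · obtain ⟨M', hsub, hinf, hno'⟩ : ∃ M' ⊆ M, M'.Infinite ∧ ∀ f,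
            ¬ Oscillates (dualBallLT v (e j).1) (dualBallGT v (e j).2) M' f := by
          simpa [HereditarilyOscillates] using hno _ _ hlt M hM
        exact ⟨M', hsub, hinf, fun _ => hno'⟩
      · exact ⟨M, subset_rfl, hM, fun h => absurd h hlt⟩) infinite_univ
  obtain ⟨g, hg⟩ := exists_dualBall_not_tendsto (hnwc n hn)
  have hgv : ∀ i, |(g : X →L[ℝ] ℝ) (v (n i))| ≤ C := fun i =>
    ((g : X →L[ℝ] ℝ).le_opNorm _).trans
      (mul_le_of_le_one_left (norm_nonneg _) (mem_closedBall_zero_iff.1 g.2) |>.trans (hv _))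
  obtain ⟨q₁, q₂, hq, h₁, h₂⟩ := exists_rat_frequently_lt_frequently_gt_of_not_tendsto hgv hg
  obtain ⟨j, hj⟩ := he (q₁, q₂)
  refine hQ j (by simpa [hj] using hq) g ⟨?_, ?_⟩ <;> rw [hj]
  exacts [StrictMono.infinite_sep_image_Ioi hn h₁ j, StrictMono.infinite_sep_image_Ioi hn h₂ j]

theorem lower_l1_estimate_of_cylinder_nonempty {v : ℕ → X} {r s : ℝ} {t : ℕ → ℕ}
    (hind : ∀ k ε, (cylinder (dualBallLT v r) (dualBallGT v s) k t ε).Nonempty)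
    (N : ℕ) (a : ℕ → ℝ) :
    (s - r) / 2 * ∑ i ∈ Finset.range N, |a i| ≤ ‖∑ i ∈ Finset.range N, a i • v (t i)‖ := by
  -- `f` follows the signs of `a` and `f'` the opposite signs, so `a i * (f - f') (v (t i))`
  -- is at least `(s - r) * |a i|`.
  obtain ⟨f, hf⟩ := hind N fun i => decide (a i < 0)
  obtain ⟨f', hf'⟩ := hind N fun i => decide (0 ≤ a i)
  set g : X →L[ℝ] ℝ := (f : X →L[ℝ] ℝ) - f'
  have hg : ‖g‖ ≤ 2 := (norm_sub_le _ _).trans <| by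
    linarith [mem_closedBall_zero_iff.1 f.2, mem_closedBall_zero_iff.1 f'.2]
  have hterm : ∀ i < N, (s - r) * |a i| ≤ a i * g (v (t i)) := by
    intro i hi
    rcases lt_or_ge (a i) 0 with ha | ha
    · have h : (f : X →L[ℝ] ℝ) (v (t i)) < r := by simpa [ha, dualBallLT] using hf i hi
      have h' : s < (f' : X →L[ℝ] ℝ) (v (t i)) := by
        simpa [ha.not_ge, dualBallGT] using hf' i hi
      rw [abs_of_neg ha, sub_apply]
      nlinarith
    · have h : s < (f : X →L[ℝ] ℝ) (v (t i)) := by simpa [ha.not_gt, dualBallGT] using hf i hi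
      have h' : (f' : X →L[ℝ] ℝ) (v (t i)) < r := by simpa [ha, dualBallLT] using hf' i hi
      rw [abs_of_nonneg ha, sub_apply]
      nlinarith
  have hsum : (s - r) * ∑ i ∈ Finset.range N, |a i| ≤ g (∑ i ∈ Finset.range N, a i • v (t i)) := by
    simp only [Finset.mul_sum, map_sum, map_smul, smul_eq_mul]
    exact Finset.sum_le_sum fun i hi => hterm i (Finset.mem_range.1 hi)
  have hnorm := (le_abs_self _).trans (g.le_opNorm (∑ i ∈ Finset.range N, a i • v (t i)))
  nlinarith [norm_nonneg (∑ i ∈ Finset.range N, a i • v (t i))]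

open scoped lp in
theorem l1Embeds_of_lower_l1_estimate [CompleteSpace X] {y : ℕ → X} {C δ : ℝ}
    (hy : ∀ i, ‖y i‖ ≤ C) (hδ : 0 < δ)
    (hlow : ∀ (N : ℕ) (a : ℕ → ℝ),
      δ * ∑ i ∈ Finset.range N, |a i| ≤ ‖∑ i ∈ Finset.range N, a i • y i‖) :
    L1Embeds X := by
  have hnorm : ∀ a : ℓ¹(ℕ, ℝ), HasSum (fun i => |a i|) ‖a‖ := fun a => by
    simpa using lp.hasSum_norm (p := 1) (by norm_num) a
  have hterm : ∀ (a : ℓ¹(ℕ, ℝ)) i, ‖a i • y i‖ ≤ C * |a i| := fun a i => by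
    rw [norm_smul, Real.norm_eq_abs, mul_comm]
    exact mul_le_mul_of_nonneg_right (hy i) (abs_nonneg _)
  have hsum : ∀ a : ℓ¹(ℕ, ℝ), Summable fun i => ‖a i • y i‖ := fun a =>
    .of_nonneg_of_le (fun _ => norm_nonneg _) (hterm a) ((hnorm a).summable.mul_left C)
  let Φ : ℓ¹(ℕ, ℝ) →ₗ[ℝ] X :=
    { toFun a := ∑' i, a i • y i
      map_add' a b := by
        simp only [lp.coeFn_add, Pi.add_apply, add_smul]
        exact (hsum a).of_norm.tsum_add (hsum b).of_norm
      map_smul' c a := by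
        simp only [lp.coeFn_smul, Pi.smul_apply, smul_eq_mul, mul_smul, RingHom.id_apply]
        exact (hsum a).of_norm.tsum_const_smul c }
  have hΦ : ∀ a, ‖Φ a‖ ≤ C * ‖a‖ := fun a => calc
    ‖Φ a‖ ≤ ∑' i, ‖a i • y i‖ := norm_tsum_le_tsum_norm (hsum a)
    _ ≤ ∑' i, C * |a i| := (hsum a).tsum_le_tsum (hterm a) ((hnorm a).summable.mul_left C)
    _ = C * ‖a‖ := by rw [tsum_mul_left, (hnorm a).tsum_eq]
  refine ⟨Φ.mkContinuous C hΦ, δ, hδ, fun a => ?_⟩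
  exact le_of_tendsto_of_tendsto' (((hnorm a).tendsto_sum_nat).const_mul δ)
    (hsum a).of_norm.hasSum.tendsto_sum_nat.norm fun N => hlow N a

theorem exists_weaklyCauchy_subseq_or_l1Embeds [CompleteSpace X] {v : ℕ → X} {C : ℝ}
    (hv : ∀ k, ‖v k‖ ≤ C) :
    (∃ φ : ℕ → ℕ, StrictMono φ ∧ WeaklyCauchy fun i => v (φ i)) ∨ L1Embeds X := by
  refine or_iff_not_imp_left.2 fun hnwc => ?_
  obtain ⟨r, s, hrs, M₀, hM₀, hosc⟩ :=
    exists_hereditarilyOscillates_of_not_weaklyCauchy hv fun φ hφ h => hnwc ⟨φ, hφ, h⟩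
  obtain ⟨t, ht⟩ := exists_cylinder_nonempty_of_hereditarilyOscillates hM₀ hosc
  exact l1Embeds_of_lower_l1_estimate (fun i => hv (t i)) (by linarith : 0 < (s - r) / 2)
    (lower_l1_estimate_of_cylinder_nonempty ht)

end Rosenthal

theorem totallyBounded_of_forall_exists_cauchySeq {α : Type*} [UniformSpace α] {s : Set α}
    (h : ∀ u : ℕ → α, (∀ n, u n ∈ s) → ∃ φ : ℕ → ℕ, StrictMono φ ∧ CauchySeq (u ∘ φ)) :
    TotallyBounded s := by
  intro V hV
  by_contra! hcov
  obtain ⟨u, hu⟩ : ∃ u : ℕ → α, ∀ n, u n ∈ s ∧ ∀ m < n, (u n, u m) ∉ V := by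
    simpa [not_subset] using seq_of_forall_finite_exists fun t ht => not_subset.1 (hcov t ht)
  obtain ⟨φ, hφ, hcauchy⟩ := h u fun n => (hu n).1
  obtain ⟨N, hN⟩ := hcauchy.mem_entourage hV
  exact (hu (φ (N + 1))).2 (φ N) (hφ N.lt_succ_self) (hN (N + 1) N N.le_succ le_rfl)

variable {Y : Type*} [NormedAddCommGroup Y] [NormedSpace ℝ Y]

theorem WeaklyNull.comp_tendsto {x : ℕ → X} (hx : WeaklyNull x) {φ : ℕ → ℕ}
    (hφ : Tendsto φ atTop atTop) : WeaklyNull fun k => x (φ k) :=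
  fun f => (hx f).comp hφ

theorem WeaklyNull.map {x : ℕ → X} (hx : WeaklyNull x) (U : X →L[ℝ] Y) :
    WeaklyNull fun k => U (x k) :=
  fun f => hx (f.comp U)

theorem NormNull.map {x : ℕ → X} (hx : NormNull x) (U : X →L[ℝ] Y) :
    NormNull fun k => U (x k) :=
  squeeze_zero (fun _ => norm_nonneg _) (fun k => U.le_opNorm (x k))
    (by simpa using hx.const_mul ‖U‖)

theorem WeaklyCauchy.weaklyNull_sub {x : ℕ → X} (hx : WeaklyCauchy x) {p q : ℕ → ℕ}
    (hp : Tendsto p atTop atTop) (hq : Tendsto q atTop atTop) :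
    WeaklyNull fun i => x (p i) - x (q i) := fun f => by
  obtain ⟨L, hL⟩ := hx f
  simpa using (hL.comp hp).sub (hL.comp hq)

theorem WeaklyCauchy.cauchySeq_map {x : ℕ → X} (hx : WeaklyCauchy x) (U : X →L[ℝ] Y)
    (hU : ∀ x : ℕ → X, WeaklyNull x → NormNull fun k => U (x k)) :
    CauchySeq fun k => U (x k) := by
  rw [cauchySeq_iff_tendsto_dist_atTop_0, tendsto_iff_seq_tendsto]
  intro pq hpq
  rw [← prod_atTop_atTop_eq] at hpq
  simpa [NormNull, Function.comp_def, dist_eq_norm] using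
    hU _ (hx.weaklyNull_sub (tendsto_fst.comp hpq) (tendsto_snd.comp hpq))

theorem isCompactOperator_of_weaklyNull_normNull [CompleteSpace X] [CompleteSpace Y]
    (hX : ¬ L1Embeds X) (U : X →L[ℝ] Y)
    (hU : ∀ x : ℕ → X, WeaklyNull x → NormNull fun k => U (x k)) :
    IsCompactOperator U := by
  refine (isCompactOperator_iff_isCompact_closure_image_closedBall (U : X →ₗ[ℝ] Y) one_pos).2 ?_
  refine (totallyBounded_closure.2 ?_).isCompact_of_isClosed isClosed_closure
  refine totallyBounded_of_forall_exists_cauchySeq fun u hu => ?_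
  choose w hw hwu using hu
  obtain ⟨φ, hφ, hwc⟩ := (exists_weaklyCauchy_subseq_or_l1Embeds
    fun n => mem_closedBall_zero_iff.1 (hw n)).resolve_right hX
  refine ⟨φ, hφ, ?_⟩
  simpa [Function.comp_def, ← hwu] using hwc.cauchySeq_map U hU

section SpreadingModels

variable (htrich : ∀ x : ℕ → X, WeaklyNull x → NormNull x ∨ AdmitsC0SM x ∨ AdmitsL1SM x)
  {S : X →L[ℝ] X} {T : X →L[ℝ] Y}
  (hSc0 : ∀ x : ℕ → X, GeneratesC0SM x → NormNull fun k => S (x k))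
  (hSl1 : ∀ x : ℕ → X, GeneratesL1SM x → ¬ AdmitsL1SM fun k => S (x k))
  (hTc0 : ∀ x : ℕ → X, GeneratesC0SM x → NormNull fun k => T (x k))
include htrich hSc0 hSl1 hTc0

theorem exists_subseq_normNull_comp {x : ℕ → X} (hx : WeaklyNull x) :
    ∃ φ : ℕ → ℕ, StrictMono φ ∧ NormNull fun k => T (S (x (φ k))) := by
  rcases htrich x hx with hnull | ⟨φ, hφ, hc0⟩ | ⟨φ, hφ, hl1⟩
  · exact ⟨id, strictMono_id, (hnull.map S).map T⟩
  · exact ⟨φ, hφ, (hSc0 _ hc0).map T⟩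
  · rcases htrich _ ((hx.comp_tendsto hφ.tendsto_atTop).map S) with hnull | ⟨ψ, hψ, hc0⟩ | hl1'
    · exact ⟨φ, hφ, hnull.map T⟩
    · exact ⟨φ ∘ ψ, hφ.comp hψ, hTc0 _ hc0⟩
    · exact absurd hl1' (hSl1 _ hl1)

theorem normNull_comp_of_weaklyNull {x : ℕ → X} (hx : WeaklyNull x) :
    NormNull fun k => T (S (x k)) :=
  tendsto_of_subseq_tendsto fun _ hns =>
    let ⟨φ, _, hφ⟩ := exists_subseq_normNull_comp htrich hSc0 hSl1 hTc0 (hx.comp_tendsto hns)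
    ⟨φ, hφ⟩

end SpreadingModels

theorem composition_compact_general
    [CompleteSpace X]
    (hl1 : ¬ L1Embeds X)
    (htrich : ∀ x : ℕ → X, WeaklyNull x →
      NormNull x ∨ AdmitsC0SM x ∨ AdmitsL1SM x)
    (S T : X →L[ℝ] X)
    (hSc0 : ∀ x : ℕ → X, GeneratesC0SM x → NormNull (fun k => S (x k)))
    (hSl1 : ∀ x : ℕ → X, GeneratesL1SM x → ¬ AdmitsL1SM (fun k => S (x k)))
    (hTc0 : ∀ x : ℕ → X, GeneratesC0SM x → NormNull (fun k => T (x k))) :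
    (∀ x : ℕ → X, WeaklyNull x → NormNull (fun k => T (S (x k)))) ∧
    IsCompactOperator (fun v => T (S v)) := by
  have hTS : ∀ x : ℕ → X, WeaklyNull x → NormNull fun k => T (S (x k)) :=
    fun _ => normNull_comp_of_weaklyNull htrich hSc0 hSl1 hTc0
  exact ⟨hTS, isCompactOperator_of_weaklyNull_normNull hl1 (T.comp S) hTS⟩

/-- Abstract form of the compact-squares theorem: if `ℓ₁` does not embed into
`X`, every weakly null sequence is norm null or admits a `c₀` or `ℓ₁`
spreading model, and `S`, `T` both annihilate (in the limit) sequences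
generating `c₀` spreading models and destroy `ℓ₁` spreading models, then `TS`
maps weakly null sequences to norm null sequences and is a compact
operator. -/
theorem composition_compact
    [CompleteSpace X]
    (hl1 : ¬ L1Embeds X)
    (htrich : ∀ x : ℕ → X, WeaklyNull x →
      NormNull x ∨ AdmitsC0SM x ∨ AdmitsL1SM x)
    (S T : X →L[ℝ] X)
    (hSc0 : ∀ x : ℕ → X, GeneratesC0SM x → NormNull (fun k => S (x k)))
    (hSl1 : ∀ x : ℕ → X, GeneratesL1SM x → ¬ AdmitsL1SM (fun k => S (x k)))
    (hTc0 : ∀ x : ℕ → X, GeneratesC0SM x → NormNull (fun k => T (x k)))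
    (hTl1 : ∀ x : ℕ → X, GeneratesL1SM x → ¬ AdmitsL1SM (fun k => T (x k))) :
    (∀ x : ℕ → X, WeaklyNull x → NormNull (fun k => T (S (x k)))) ∧
    IsCompactOperator (fun v => T (S v)) :=
  composition_compact_general hl1 htrich S T hSc0 hSl1 hTc0
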